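/- Fix a, b ∈ ℤ/4ℤ, R = R_{a+bw}, n ≥ 1, and let C ⊆ Rⁿ be an R-submodule. Then the DNA code Φ(C) = {Φ(c) : c ∈ C} ⊆ Σⁿ is closed under the complement operation y ↦ y^C if and only if the constant vector (2+2w, 2+2w, …, 2+2w) belongs to C. -/

import Mathlib

/-!
Writing elements of `R_{a+bw}` as `x₀ + x₁ w`, adding `2 + 2w` adds `(2, 2)` to the coordinates,
and a look at the table of the Gau map shows that this replaces every nucleotide pair by its
Watson–Crick complement. Hence `Φ(x + u) = Φ(x)^C` for the constant vector `u = (2+2w, …, 2+2w)`.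
If `u ∈ C`, the code is closed under complement because `C` is closed under translation by `u`;
conversely the complement of `Φ(0)` is `Φ(u)`, so closure and injectivity of `Φ` force `u ∈ C`.
-/

open Polynomial

/-- The base ring ℤ/4ℤ. -/
abbrev Z4 := ZMod 4

/-- The polynomial X² − (a + bX) over ℤ/4ℤ. -/
noncomputable def wPoly (a b : Z4) : Z4[X] := X ^ 2 - (C b * X + C a)

/-- The ring R_{a+bw} = (ℤ/4ℤ)[X]/(X² − (a + bX)); every element is uniquely
x₀ + x₁·w with x₀, x₁ ∈ ℤ/4ℤ, and w² = a + b·w. -/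
abbrev Rw (a b : Z4) : Type := AdjoinRoot (wPoly a b)

/-- The element w of R_{a+bw}. -/
noncomputable def ww (a b : Z4) : Rw a b := AdjoinRoot.root _

instance (a b : Z4) : Nonempty (Rw a b) := ⟨0⟩

/-- The Gau map expressed on coordinates:  ψ(x₀, x₁) is the DNA pair (in Fin 4 × Fin 4,
with A,G,C,T encoded as 0,1,2,3) assigned to the ring element x₀ + x₁·w. -/
def psi (p : Z4 × Z4) : Fin 4 × Fin 4 :=
  match p.1.val, p.2.val with
  | 0, 0 => (3, 3)
  | 1, 0 => (0, 1)
  | 2, 0 => (2, 2)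
  | 3, 0 => (1, 0)
  | 0, 1 => (0, 2)
  | 1, 1 => (0, 3)
  | 2, 1 => (1, 3)
  | 3, 1 => (1, 2)
  | 0, 2 => (1, 1)
  | 1, 2 => (2, 3)
  | 2, 2 => (0, 0)
  | 3, 2 => (3, 2)
  | 0, 3 => (2, 0)
  | 1, 3 => (2, 1)
  | 2, 3 => (3, 1)
  | _, _ => (3, 0)

/-- `phi` is a Gau map on R_{a+bw}: on the element x₀ + x₁·w it takes the value
prescribed by the table ψ. -/
def IsGauMap (a b : Z4) (phi : Rw a b → Fin 4 × Fin 4) : Prop :=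
  ∀ x₀ x₁ : Z4,
    phi (algebraMap Z4 (Rw a b) x₀ + algebraMap Z4 (Rw a b) x₁ * ww a b) = psi (x₀, x₁)

/-- Coordinatewise extension Φ of a Gau map φ to vectors. -/
def PhiV (a b : Z4) (phi : Rw a b → Fin 4 × Fin 4) (n : ℕ) (x : Fin n → Rw a b) :
    Fin n → Fin 4 × Fin 4 :=
  fun j => phi (x j)

/-- Inverse Φ⁻¹ of the coordinatewise extension of a Gau map. -/
noncomputable def PhiVinv (a b : Z4) (phi : Rw a b → Fin 4 × Fin 4) (n : ℕ)
    (y : Fin n → Fin 4 × Fin 4) : Fin n → Rw a b :=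
  fun j => Function.invFun phi (y j)

/-- DNA-string reversal y ↦ y^R on Σⁿ: read the length-2n DNA string backwards,
i.e. reverse the order of the pairs and swap the two entries of each pair. -/
def dnaRev (n : ℕ) (y : Fin n → Fin 4 × Fin 4) : Fin n → Fin 4 × Fin 4 :=
  fun j => ((y j.rev).2, (y j.rev).1)

/-- Watson–Crick complement y ↦ y^C on Σⁿ. -/
def dnaCompl (n : ℕ) (y : Fin n → Fin 4 × Fin 4) : Fin n → Fin 4 × Fin 4 :=
  fun j => (3 - (y j).1, 3 - (y j).2)

/-- Vector reversal g ↦ g^r on Rⁿ. -/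
def vecRev {α : Type*} (n : ℕ) (x : Fin n → α) : Fin n → α :=
  fun j => x j.rev

theorem AdjoinRoot.bijective_algebraMap_add_algebraMap_mul_root {R : Type*} [CommRing R]
    {g : R[X]} (hg : g.Monic) (h2 : g.natDegree = 2) :
    Function.Bijective fun p : R × R =>
      algebraMap R (AdjoinRoot g) p.1 + algebraMap R (AdjoinRoot g) p.2 * AdjoinRoot.root g := by
  let B := (AdjoinRoot.powerBasis' hg).basis.reindex (finCongr h2)
  have hB : ∀ i : Fin 2, B i = AdjoinRoot.root g ^ (i : ℕ) := fun i => by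
    simp only [B, Module.Basis.reindex_apply, PowerBasis.coe_basis, AdjoinRoot.powerBasis'_gen]
    rfl
  have hcoord : (fun p : R × R =>
      algebraMap R (AdjoinRoot g) p.1 + algebraMap R _ p.2 * AdjoinRoot.root g) =
      B.equivFun.symm ∘ (finTwoArrowEquiv R).symm := by
    funext p
    simp [Module.Basis.equivFun_symm_apply, Fin.sum_univ_two, hB, Algebra.smul_def]
  rw [hcoord]
  exact B.equivFun.symm.bijective.comp (finTwoArrowEquiv R).symm.bijective

theorem wPoly_monic (a b : Z4) : (wPoly a b).Monic :=
  monic_X_pow_sub (degree_linear_le.trans_lt (by decide))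

theorem wPoly_natDegree (a b : Z4) : (wPoly a b).natDegree = 2 := by
  have : Fact (1 < 4) := ⟨by decide⟩
  rw [wPoly, natDegree_sub_eq_left_of_natDegree_lt] <;> rw [natDegree_X_pow]
  exact natDegree_linear_le.trans_lt one_lt_two

noncomputable def coordEquiv (a b : Z4) : Z4 × Z4 ≃ Rw a b :=
  Equiv.ofBijective _ <|
    AdjoinRoot.bijective_algebraMap_add_algebraMap_mul_root (wPoly_monic a b) (wPoly_natDegree a b)

theorem coordEquiv_apply (a b : Z4) (p : Z4 × Z4) :
    coordEquiv a b p = algebraMap Z4 (Rw a b) p.1 + algebraMap Z4 (Rw a b) p.2 * ww a b :=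
  rfl

theorem coordEquiv_add_two_two (a b : Z4) (p : Z4 × Z4) :
    coordEquiv a b (p + (2, 2)) = coordEquiv a b p + (2 + 2 * ww a b) := by
  simp only [coordEquiv_apply, Prod.fst_add, Prod.snd_add, map_add, map_ofNat]
  ring

theorem psi_injective : Function.Injective psi := by
  decide

theorem psi_add_two_two (p : Z4 × Z4) :
    psi (p + (2, 2)) = (3 - (psi p).1, 3 - (psi p).2) := by
  revert p
  decide

namespace IsGauMap

variable {a b : Z4} {phi : Rw a b → Fin 4 × Fin 4}

theorem comp_coordEquiv (hphi : IsGauMap a b phi) : phi ∘ coordEquiv a b = psi :=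
  funext fun p => hphi p.1 p.2

theorem injective (hphi : IsGauMap a b phi) : Function.Injective phi := by
  have hphi_eq : phi = psi ∘ (coordEquiv a b).symm := by
    rw [← hphi.comp_coordEquiv, Function.comp_assoc, Equiv.self_comp_symm, Function.comp_id]
  rw [hphi_eq]
  exact psi_injective.comp (coordEquiv a b).symm.injective

theorem apply_add_two_add_two_mul_ww (hphi : IsGauMap a b phi) (z : Rw a b) :
    phi (z + (2 + 2 * ww a b)) = (3 - (phi z).1, 3 - (phi z).2) := by
  obtain ⟨p, rfl⟩ := (coordEquiv a b).surjective z
  rw [← coordEquiv_add_two_two, ← Function.comp_apply (f := phi), hphi.comp_coordEquiv,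
    ← Function.comp_apply (f := phi), hphi.comp_coordEquiv, psi_add_two_two]

theorem PhiV_injective (hphi : IsGauMap a b phi) (n : ℕ) : Function.Injective (PhiV a b phi n) :=
  hphi.injective.comp_left

theorem PhiV_add_const (hphi : IsGauMap a b phi) (n : ℕ) (x : Fin n → Rw a b) :
    PhiV a b phi n (x + fun _ => 2 + 2 * ww a b) = dnaCompl n (PhiV a b phi n x) :=
  funext fun j => hphi.apply_add_two_add_two_mul_ww (x j)

end IsGauMap

theorem dna_code_complement_iff_general (a b : Z4) (n : ℕ)
    (phi : Rw a b → Fin 4 × Fin 4) (hphi : IsGauMap a b phi)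
    (C : Submodule (Rw a b) (Fin n → Rw a b)) :
    (∀ y ∈ PhiV a b phi n '' (C : Set (Fin n → Rw a b)),
        dnaCompl n y ∈ PhiV a b phi n '' (C : Set (Fin n → Rw a b))) ↔
      (fun _ : Fin n => 2 + 2 * ww a b) ∈ C := by
  constructor
  · intro hclosed
    obtain ⟨c, hc, hcu⟩ := hclosed _ ⟨0, C.zero_mem, rfl⟩
    rw [← hphi.PhiV_add_const, zero_add] at hcu
    obtain rfl := hphi.PhiV_injective n hcu
    exact hc
  · rintro hu _ ⟨c, hc, rfl⟩
    exact ⟨c + fun _ => 2 + 2 * ww a b, C.add_mem hc hu, hphi.PhiV_add_const n c⟩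

/-- for an R-submodule C ⊆ Rⁿ, the DNA code Φ(C) is closed under the
Watson–Crick complement y ↦ y^C iff the constant vector (2+2w, …, 2+2w) belongs to C. -/
theorem dna_code_complement_iff (a b : Z4) (n : ℕ) (hn : 1 ≤ n)
    (phi : Rw a b → Fin 4 × Fin 4) (hphi : IsGauMap a b phi)
    (C : Submodule (Rw a b) (Fin n → Rw a b)) :
    (∀ y ∈ PhiV a b phi n '' (C : Set (Fin n → Rw a b)),
        dnaCompl n y ∈ PhiV a b phi n '' (C : Set (Fin n → Rw a b))) ↔
      (fun _ : Fin n => 2 + 2 * ww a b) ∈ C :=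
  dna_code_complement_iff_general a b n phi hphi C
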